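/- Expressive completeness of CO over generalized causal teams: a nonempty class K of generalized causal teams over a finite signature σ is definable by a CO-formula if and only if K is flat and closed under equivalence ≈. -/
import Mathlib


namespace CausalTeams

attribute [local instance] Classical.propDecidable

/-- A system of functions over a signature: each endogenous variable `V ∈ En` has a set
of parents `PA V` (not containing `V`) and a function computing its value, which depends
only on the values of its parents. -/
structure FuncSystem (Var : Type) (Val : Var → Type) : Type where
  En : Set Var
  PA : Var → Set Var
  pa_ne : ∀ V, V ∉ PA V
  fn : ∀ V, (∀ W, Val W) → Val V
  dep_only : ∀ V (s t : ∀ W, Val W), (∀ W ∈ PA V, s W = t W) → fn V s = fn V t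

variable {Var : Type} {Val : Var → Type}

/-- Assignments of values to the variables. -/
abbrev Assign (Var : Type) (Val : Var → Type) : Type := ∀ V, Val V

/-- An assignment is compatible with a system of functions if each endogenous variable's
value is the one generated by its function. -/
def Compat (s : Assign Var Val) (F : FuncSystem Var Val) : Prop :=
  ∀ V ∈ F.En, s V = F.fn V s

/-- The endogenous variables whose generating function is constant. -/
def Cn (F : FuncSystem Var Val) : Set Var :=
  {V | V ∈ F.En ∧ ∀ s t : Assign Var Val, F.fn V s = F.fn V t}

/-- The functions for `V` in `F` and `G` are equivalent up to dummy arguments: they agree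
whenever their arguments agree on the common parents of `V`. -/
def fnEquiv (F G : FuncSystem Var Val) (V : Var) : Prop :=
  ∀ s t : Assign Var Val,
    (∀ W, W ∈ F.PA V → W ∈ G.PA V → s W = t W) → F.fn V s = G.fn V t

/-- Equivalence of systems of functions up to dummy arguments. -/
def sysEquiv (F G : FuncSystem Var Val) : Prop :=
  F.En \ Cn F = G.En \ Cn G ∧ ∀ V ∈ F.En \ Cn F, fnEquiv F G V

/-- The edge relation of the causal graph of `F`. -/
def Edge (F : FuncSystem Var Val) (W V : Var) : Prop := V ∈ F.En ∧ W ∈ F.PA V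

/-- `F` is recursive: its causal graph is acyclic. -/
def RecursiveSys (F : FuncSystem Var Val) : Prop :=
  ∀ V, ¬ Relation.TransGen (Edge F) V V

/-- The system of functions resulting from the intervention `do(X = x)`: the variables of
`X` are made exogenous; parents and functions of the remaining endogenous variables are kept. -/
def restrictSys (F : FuncSystem Var Val) (X : Finset Var) : FuncSystem Var Val where
  En := F.En \ ↑X
  PA := F.PA
  pa_ne := F.pa_ne
  fn := F.fn
  dep_only := F.dep_only

section InterveneAssign
variable [DecidableEq Var] [Fintype Var]

/-- One step of recomputation after the intervention `do(X = x)`. -/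
noncomputable def stepFn (F : FuncSystem Var Val) (X : Finset Var) (x : Assign Var Val)
    (s : Assign Var Val) : Assign Var Val :=
  fun V => if V ∈ X then x V else if V ∈ F.En then F.fn V s else s V

/-- The result of the intervention `do(X = x)` on the assignment `s`
(for recursive systems, iterating the recomputation step sufficiently many times
reaches the fixed point). -/
noncomputable def interveneAssign (F : FuncSystem Var Val) (X : Finset Var) (x : Assign Var Val)
    (s : Assign Var Val) : Assign Var Val :=
  (stepFn F X x)^[Fintype.card Var + 1] s

end InterveneAssign

/-- Formulas: equality atoms `V = v`, dependence atoms `=(Xs; Y)`, negation, conjunction,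
tensor disjunction, global disjunction, and interventionist counterfactuals
`X = x □→ φ` (the antecedent is a finite set of variables together with the values
imposed on them, read off from an assignment; such antecedents are always consistent). -/
inductive Formula (Var : Type) (Val : Var → Type) : Type where
  | eq : (V : Var) → Val V → Formula Var Val
  | dep : List Var → Var → Formula Var Val
  | neg : Formula Var Val → Formula Var Val
  | and : Formula Var Val → Formula Var Val → Formula Var Val
  | or : Formula Var Val → Formula Var Val → Formula Var Val
  | gor : Formula Var Val → Formula Var Val → Formula Var Val
  | cf : Finset Var → Assign Var Val → Formula Var Val → Formula Var Val

/-- CO-formulas: no dependence atoms, no global disjunction. -/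
def IsCO : Formula Var Val → Prop
  | .eq _ _ => True
  | .dep _ _ => False
  | .neg φ => IsCO φ
  | .and φ ψ => IsCO φ ∧ IsCO ψ
  | .or φ ψ => IsCO φ ∧ IsCO ψ
  | .gor _ _ => False
  | .cf _ _ φ => IsCO φ

/-- COD-formulas: CO plus dependence atoms; negation applies only to CO-formulas. -/
def IsCOD : Formula Var Val → Prop
  | .eq _ _ => True
  | .dep _ _ => True
  | .neg φ => IsCO φ
  | .and φ ψ => IsCOD φ ∧ IsCOD ψ
  | .or φ ψ => IsCOD φ ∧ IsCOD ψ
  | .gor _ _ => False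
  | .cf _ _ φ => IsCOD φ

/-- CO_⤘-formulas: CO plus global disjunction; negation applies only to CO-formulas. -/
def IsCOglobal : Formula Var Val → Prop
  | .eq _ _ => True
  | .dep _ _ => False
  | .neg φ => IsCO φ
  | .and φ ψ => IsCOglobal φ ∧ IsCOglobal ψ
  | .or φ ψ => IsCOglobal φ ∧ IsCOglobal ψ
  | .gor φ ψ => IsCOglobal φ ∧ IsCOglobal ψ
  | .cf _ _ φ => IsCOglobal φ

/-- Counterfactual-free formulas: no occurrence of `□→`. -/
def CFFree : Formula Var Val → Prop
  | .eq _ _ => True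
  | .dep _ _ => True
  | .neg φ => CFFree φ
  | .and φ ψ => CFFree φ ∧ CFFree ψ
  | .or φ ψ => CFFree φ ∧ CFFree ψ
  | .gor φ ψ => CFFree φ ∧ CFFree ψ
  | .cf _ _ _ => False

section Semantics
variable [DecidableEq Var] [Fintype Var]

/-- Causal team semantics: satisfaction of a formula by a team of assignments together
with a system of functions. -/
noncomputable def csat : FuncSystem Var Val → Set (Assign Var Val) → Formula Var Val → Prop
  | _, T, .eq V v => ∀ s ∈ T, s V = v
  | _, T, .dep Xs Y => ∀ s ∈ T, ∀ t ∈ T, (∀ W ∈ Xs, s W = t W) → s Y = t Y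
  | F, T, .neg φ => ∀ s ∈ T, ¬ csat F {s} φ
  | F, T, .and φ ψ => csat F T φ ∧ csat F T ψ
  | F, T, .or φ ψ => ∃ T₁ T₂, T₁ ∪ T₂ = T ∧ csat F T₁ φ ∧ csat F T₂ ψ
  | F, T, .gor φ ψ => csat F T φ ∨ csat F T ψ
  | F, T, .cf X x φ => csat (restrictSys F X) (interveneAssign F X x '' T) φ

end Semantics

/-- Generalized causal teams: sets of pairs of an assignment and a system of functions. -/
abbrev GCT (Var : Type) (Val : Var → Type) : Type :=
  Set (Assign Var Val × FuncSystem Var Val)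

/-- The team component of a generalized causal team. -/
def teamOf (T : GCT Var Val) : Set (Assign Var Val) := Prod.fst '' T

/-- A genuine (recursive) generalized causal team: all pairs are compatible and all
function components are recursive. -/
def IsGCT (T : GCT Var Val) : Prop := ∀ p ∈ T, Compat p.1 p.2 ∧ RecursiveSys p.2

section GSemantics
variable [DecidableEq Var] [Fintype Var]

/-- Pointwise intervention on a generalized causal team. -/
noncomputable def gIntervene (T : GCT Var Val) (X : Finset Var) (x : Assign Var Val) : GCT Var Val :=
  (fun p => (interveneAssign p.2 X x p.1, restrictSys p.2 X)) '' T

/-- Generalized causal team semantics. -/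
noncomputable def gsat : GCT Var Val → Formula Var Val → Prop
  | T, .eq V v => ∀ p ∈ T, p.1 V = v
  | T, .dep Xs Y => ∀ p ∈ T, ∀ q ∈ T, (∀ W ∈ Xs, p.1 W = q.1 W) → p.1 Y = q.1 Y
  | T, .neg φ => ∀ p ∈ T, ¬ gsat {p} φ
  | T, .and φ ψ => gsat T φ ∧ gsat T ψ
  | T, .or φ ψ => ∃ T₁ T₂, T₁ ∪ T₂ = T ∧ gsat T₁ φ ∧ gsat T₂ ψ
  | T, .gor φ ψ => gsat T φ ∨ gsat T ψ
  | T, .cf X x φ => gsat (gIntervene T X x) φ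

end GSemantics

/-- Equivalence of generalized causal teams: for each system of functions `F`, the
assignments occurring together with a function component `∼`-similar to `F` are the same. -/
def gctEquiv (S T : GCT Var Val) : Prop :=
  ∀ F : FuncSystem Var Val,
    {s | ∃ G, (s, G) ∈ S ∧ sysEquiv G F} = {s | ∃ G, (s, G) ∈ T ∧ sysEquiv G F}

/-- `S ≼ T` iff `S ≈ R ⊆ T` for some `R`. -/
def sle (S T : GCT Var Val) : Prop := ∃ R : GCT Var Val, gctEquiv S R ∧ R ⊆ T

/-- The generalized causal team generated by a causal team. -/
def toGCT (team : Set (Assign Var Val)) (F : FuncSystem Var Val) : GCT Var Val :=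
  (fun s => (s, F)) '' team

/-- Equivalence of elements of generalized causal teams: same assignment and
`∼`-similar function components. -/
def pairEquiv (p q : Assign Var Val × FuncSystem Var Val) : Prop :=
  p.1 = q.1 ∧ sysEquiv p.2 q.2

/-- The quotient `T/≈` has at most `k` elements: `T` is covered by `k` representatives. -/
def quotCardLE (T : GCT Var Val) (k : ℕ) : Prop :=
  ∃ R : Finset (Assign Var Val × FuncSystem Var Val),
    R.card ≤ k ∧ ∀ p ∈ T, ∃ q ∈ R, pairEquiv p q

section Entailment
variable [DecidableEq Var] [Fintype Var]

/-- Entailment over (recursive) generalized causal teams. -/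
def gEntails (Δ : Set (Formula Var Val)) (α : Formula Var Val) : Prop :=
  ∀ T : GCT Var Val, IsGCT T → (∀ γ ∈ Δ, gsat T γ) → gsat T α

/-- Entailment over (recursive) causal teams. -/
def cEntails (Δ : Set (Formula Var Val)) (α : Formula Var Val) : Prop :=
  ∀ (F : FuncSystem Var Val) (team : Set (Assign Var Val)),
    RecursiveSys F → (∀ s ∈ team, Compat s F) →
    (∀ γ ∈ Δ, csat F team γ) → csat F team α

/-- Causal incompatibility of two formulas. -/
def Incompatible (φ ψ : Formula Var Val) : Prop :=
  ∀ (F G : FuncSystem Var Val) (S T : Set (Assign Var Val)),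
    S.Nonempty → T.Nonempty → RecursiveSys F → RecursiveSys G →
    (∀ s ∈ S, Compat s F) → (∀ t ∈ T, Compat t G) →
    csat F S φ → csat G T ψ → ¬ sysEquiv F G

end Entailment

section FormulaHelpers
variable [DecidableEq Var] [Fintype Var] [Nonempty Var]
  [∀ V, Fintype (Val V)] [∀ V, Nonempty (Val V)]

/-- The falsum formula `⊥ := V = v ∧ V ≠ v`. -/
noncomputable def falsum : Formula Var Val :=
  let V := Classical.arbitrary Var
  Formula.and (Formula.eq V (Classical.arbitrary (Val V)))
    (Formula.neg (Formula.eq V (Classical.arbitrary (Val V))))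

/-- Finite conjunction (the empty conjunction is `¬⊥`). -/
noncomputable def bigAnd : List (Formula Var Val) → Formula Var Val
  | [] => Formula.neg falsum
  | [φ] => φ
  | φ :: l => Formula.and φ (bigAnd l)

/-- Finite tensor disjunction (the empty disjunction is `⊥`). -/
noncomputable def bigOr : List (Formula Var Val) → Formula Var Val
  | [] => falsum
  | [φ] => φ
  | φ :: l => Formula.or φ (bigOr l)

/-- Finite global disjunction (the empty disjunction is `⊥`). -/
noncomputable def bigGor : List (Formula Var Val) → Formula Var Val
  | [] => falsum
  | [φ] => φ
  | φ :: l => Formula.gor φ (bigGor l)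

/-- The conjunction `⋀_{V ∈ Dom} V = s(V)` describing the assignment `s`. -/
noncomputable def eqConj (s : Assign Var Val) : Formula Var Val :=
  bigAnd ((Finset.univ : Finset Var).toList.map fun V => Formula.eq V (s V))

/-- `Θ^A := ⋁_{s ∈ A} ⋀_{V ∈ Dom} V = s(V)`. -/
noncomputable def Theta (A : Finset (Assign Var Val)) : Formula Var Val :=
  bigOr (A.toList.map eqConj)

/-- The constancy atom `=(V)`. -/
def conAtom (V : Var) : Formula Var Val := Formula.dep [] V

/-- `μ := ⋀_{V ∈ Dom} ⋀_{w} (W_V = w □→ =(V))` where `W_V = Dom \ {V}`. -/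
noncomputable def muForm : Formula Var Val :=
  bigAnd ((Finset.univ : Finset Var).toList.map fun V =>
    bigAnd (((Finset.univ : Finset (Assign Var Val))).toList.map fun w =>
      Formula.cf ((Finset.univ : Finset Var).erase V) w (conAtom V)))

/-- `χ := μ ∧ ⋀_{V ∈ Dom} =(V)`. -/
noncomputable def chiForm : Formula Var Val :=
  Formula.and muForm (bigAnd ((Finset.univ : Finset Var).toList.map conAtom))

/-- `χ_k`: the `k`-fold tensor disjunction of `χ` (with `χ_0 := ⊥`). -/
noncomputable def chiK : ℕ → Formula Var Val
  | 0 => falsum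
  | 1 => chiForm
  | n + 2 => Formula.or chiForm (chiK (n + 1))

end FormulaHelpers

/-! ### Auxiliary lemmas for the expressive-completeness theorem -/

section AuxEquiv

variable {Var : Type} {Val : Var → Type}

/-- A function depending only on values on `A` and only on values on `B` depends only on
values on `A ∩ B`. -/
lemma dep_inter {β : Type} (h : Assign Var Val → β) (A B : Set Var)
    (hA : ∀ a b : Assign Var Val, (∀ W ∈ A, a W = b W) → h a = h b)
    (hB : ∀ a b : Assign Var Val, (∀ W ∈ B, a W = b W) → h a = h b)
    (a b : Assign Var Val) (hab : ∀ W, W ∈ A → W ∈ B → a W = b W) : h a = h b := by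
  classical
  have h1 : h a = h (fun W => if W ∈ A then a W else b W) :=
    hA _ _ (fun W hW => by simp [hW])
  have h2 : h (fun W => if W ∈ A then a W else b W) = h b :=
    hB _ _ (fun W hW => by
      by_cases hWA : W ∈ A
      · simpa [hWA] using hab W hWA hW
      · simp [hWA])
  exact h1.trans h2

lemma fnEquiv_of_fn_eq {F G : FuncSystem Var Val} {V : Var}
    (h : ∀ w, F.fn V w = G.fn V w) : fnEquiv F G V := by
  intro a b hab
  have h2 : ∀ a b : Assign Var Val, (∀ W ∈ G.PA V, a W = b W) → F.fn V a = F.fn V b := by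
    intro a b hab
    rw [h a, h b]; exact G.dep_only V a b hab
  have := dep_inter (F.fn V) (F.PA V) (G.PA V) (F.dep_only V) h2 a b hab
  rw [← h b]; exact this

lemma fnEquiv_refl (F : FuncSystem Var Val) (V : Var) : fnEquiv F F V :=
  fun s t h => F.dep_only V s t (fun W hW => h W hW hW)

lemma sysEquiv_refl (F : FuncSystem Var Val) : sysEquiv F F :=
  ⟨rfl, fun V _ => fnEquiv_refl F V⟩

lemma sysEquiv_fn_eq {F G : FuncSystem Var Val} (h : sysEquiv F G) {V : Var}
    (hV : V ∈ F.En \ Cn F) : ∀ w, F.fn V w = G.fn V w :=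
  fun w => h.2 V hV w w (fun _ _ _ => rfl)

lemma sysEquiv_symm {F G : FuncSystem Var Val} (h : sysEquiv F G) : sysEquiv G F := by
  refine ⟨h.1.symm, fun V hV => ?_⟩
  exact fnEquiv_of_fn_eq (fun w => (sysEquiv_fn_eq h (h.1.symm ▸ hV) w).symm)

lemma sysEquiv_trans {F G H : FuncSystem Var Val} (h1 : sysEquiv F G) (h2 : sysEquiv G H) :
    sysEquiv F H := by
  refine ⟨h1.1.trans h2.1, fun V hV => ?_⟩
  have hVG : V ∈ G.En \ Cn G := h1.1 ▸ hV
  exact fnEquiv_of_fn_eq (fun w => (sysEquiv_fn_eq h1 hV w).trans (sysEquiv_fn_eq h2 hVG w))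

lemma diff_cn_restrict (G : FuncSystem Var Val) (X : Finset Var) :
    (restrictSys G X).En \ Cn (restrictSys G X) = (G.En \ Cn G) \ ↑X := by
  ext V
  simp only [restrictSys, Cn, Set.mem_diff, Set.mem_setOf_eq]
  tauto

lemma sysEquiv_restrict {G' G : FuncSystem Var Val} (h : sysEquiv G' G) (X : Finset Var) :
    sysEquiv (restrictSys G' X) (restrictSys G X) := by
  refine ⟨by rw [diff_cn_restrict, diff_cn_restrict, h.1], fun V hV => ?_⟩
  rw [diff_cn_restrict] at hV
  exact h.2 V hV.1

end AuxEquiv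

section AuxSem

variable {Var : Type} {Val : Var → Type} [DecidableEq Var] [Fintype Var]

lemma gsat_eq_iff (T : GCT Var Val) (V : Var) (v : Val V) :
    gsat T (.eq V v) ↔ ∀ p ∈ T, p.1 V = v := by simp only [gsat]

lemma gsat_neg_iff (T : GCT Var Val) (φ : Formula Var Val) :
    gsat T (.neg φ) ↔ ∀ p ∈ T, ¬ gsat {p} φ := by simp only [gsat]

lemma gsat_and_iff (T : GCT Var Val) (φ ψ : Formula Var Val) :
    gsat T (.and φ ψ) ↔ gsat T φ ∧ gsat T ψ := by simp only [gsat]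

lemma gsat_or_iff (T : GCT Var Val) (φ ψ : Formula Var Val) :
    gsat T (.or φ ψ) ↔ ∃ T₁ T₂, T₁ ∪ T₂ = T ∧ gsat T₁ φ ∧ gsat T₂ ψ := by simp only [gsat]

lemma gsat_cf_iff (T : GCT Var Val) (X : Finset Var) (x : Assign Var Val)
    (φ : Formula Var Val) :
    gsat T (.cf X x φ) ↔ gsat (gIntervene T X x) φ := by simp only [gsat]

lemma gsat_eq_singleton (p : Assign Var Val × FuncSystem Var Val) (V : Var) (v : Val V) :
    gsat ({p} : GCT Var Val) (.eq V v) ↔ p.1 V = v := by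
  rw [gsat_eq_iff]; simp

lemma gsat_neg_singleton (p : Assign Var Val × FuncSystem Var Val) (φ : Formula Var Val) :
    gsat ({p} : GCT Var Val) (.neg φ) ↔ ¬ gsat {p} φ := by
  rw [gsat_neg_iff]; simp

lemma gsat_cf_singleton (p : Assign Var Val × FuncSystem Var Val) (X : Finset Var)
    (x : Assign Var Val) (φ : Formula Var Val) :
    gsat ({p} : GCT Var Val) (.cf X x φ) ↔
      gsat ({(interveneAssign p.2 X x p.1, restrictSys p.2 X)} : GCT Var Val) φ := by
  rw [gsat_cf_iff, gIntervene, Set.image_singleton]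

lemma gsat_empty {φ : Formula Var Val} : IsCO φ → gsat (∅ : GCT Var Val) φ := by
  induction φ with
  | eq V v => intro _; rw [gsat_eq_iff]; simp
  | dep l Y => intro h; exact h.elim
  | neg ψ ih => intro _; rw [gsat_neg_iff]; simp
  | and ψ χ ih1 ih2 => intro h; rw [gsat_and_iff]; exact ⟨ih1 h.1, ih2 h.2⟩
  | or ψ χ ih1 ih2 => intro h; rw [gsat_or_iff]; exact ⟨∅, ∅, by simp, ih1 h.1, ih2 h.2⟩
  | gor ψ χ ih1 ih2 => intro h; exact h.elim
  | cf X x ψ ih =>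
    intro h
    rw [gsat_cf_iff]
    have : gIntervene (∅ : GCT Var Val) X x = ∅ := by simp [gIntervene]
    rw [this]
    exact ih h

lemma gsat_singleton_or {p : Assign Var Val × FuncSystem Var Val} {φ ψ : Formula Var Val}
    (hφ : IsCO φ) (hψ : IsCO ψ) :
    gsat ({p} : GCT Var Val) (.or φ ψ) ↔ gsat {p} φ ∨ gsat {p} ψ := by
  rw [gsat_or_iff]
  constructor
  · rintro ⟨T1, T2, hU, h1, h2⟩
    rcases (show p ∈ T1 ∪ T2 from hU.symm ▸ Set.mem_singleton p) with hp | hp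
    · left
      rwa [show T1 = {p} from Set.Subset.antisymm (hU ▸ Set.subset_union_left)
        (Set.singleton_subset_iff.2 hp)] at h1
    · right
      rwa [show T2 = {p} from Set.Subset.antisymm (hU ▸ Set.subset_union_right)
        (Set.singleton_subset_iff.2 hp)] at h2
  · rintro (h | h)
    · exact ⟨{p}, ∅, by simp, h, gsat_empty hψ⟩
    · exact ⟨∅, {p}, by simp, gsat_empty hφ, h⟩

/-- CO-formulas are flat. -/
lemma co_flat (φ : Formula Var Val) :
    IsCO φ → ∀ T : GCT Var Val, gsat T φ ↔ ∀ p ∈ T, gsat {p} φ := by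
  induction φ with
  | eq V v =>
    intro _ T
    rw [gsat_eq_iff]
    refine forall_congr' fun p => imp_congr_right fun hp => ?_
    rw [gsat_eq_singleton]
  | dep l Y => intro h; exact h.elim
  | neg ψ ih =>
    intro _ T
    rw [gsat_neg_iff]
    refine forall_congr' fun p => imp_congr_right fun hp => ?_
    rw [gsat_neg_singleton]
  | and ψ χ ih1 ih2 =>
    intro h T
    rw [gsat_and_iff, ih1 h.1 T, ih2 h.2 T]
    constructor
    · intro hh p hp
      rw [gsat_and_iff]
      exact ⟨hh.1 p hp, hh.2 p hp⟩
    · intro hh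
      constructor <;> intro p hp <;> have := hh p hp <;> rw [gsat_and_iff] at this
      · exact this.1
      · exact this.2
  | or ψ χ ih1 ih2 =>
    intro h T
    rw [gsat_or_iff]
    constructor
    · rintro ⟨T1, T2, hU, h1, h2⟩ p hp
      rw [gsat_singleton_or h.1 h.2]
      rcases (show p ∈ T1 ∪ T2 from hU.symm ▸ hp) with hp' | hp'
      · exact Or.inl ((ih1 h.1 T1).1 h1 p hp')
      · exact Or.inr ((ih2 h.2 T2).1 h2 p hp')
    · intro hh
      refine ⟨{p ∈ T | gsat {p} ψ}, {p ∈ T | gsat {p} χ}, ?_, ?_, ?_⟩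
      · apply Set.Subset.antisymm
        · rintro p (hp | hp) <;> exact hp.1
        · intro p hp
          rcases (gsat_singleton_or h.1 h.2).1 (hh p hp) with h' | h'
          · exact Or.inl ⟨hp, h'⟩
          · exact Or.inr ⟨hp, h'⟩
      · exact (ih1 h.1 _).2 fun p hp => hp.2
      · exact (ih2 h.2 _).2 fun p hp => hp.2
  | gor ψ χ ih1 ih2 => intro h; exact h.elim
  | cf X x ψ ih =>
    intro h T
    rw [gsat_cf_iff, ih h (gIntervene T X x)]
    constructor
    · intro hh p hp
      rw [gsat_cf_singleton]
      exact hh _ ⟨p, hp, rfl⟩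
    · rintro hh q ⟨p, hp, rfl⟩
      have := hh p hp
      rwa [gsat_cf_singleton] at this

end AuxSem
section AuxPC

variable {Var : Type} {Val : Var → Type}

/-- Partial compatibility: compatibility at constant endogenous variables. -/
def PCompat (t : Assign Var Val) (G : FuncSystem Var Val) : Prop :=
  ∀ V ∈ Cn G, t V = G.fn V t

lemma Compat.pcompat {t : Assign Var Val} {G : FuncSystem Var Val}
    (h : Compat t G) : PCompat t G := fun V hV => h V hV.1

variable [DecidableEq Var] [Fintype Var]

lemma iterate_pc {G : FuncSystem Var Val} {X : Finset Var} {x t : Assign Var Val}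
    (hpc : PCompat t G) {V : Var} (hX : V ∉ X) (hV : V ∉ G.En \ Cn G) (k : ℕ) :
    (stepFn G X x)^[k] t V = t V := by
  induction k with
  | zero => rfl
  | succ k ih =>
    rw [Function.iterate_succ_apply']
    by_cases hEn : V ∈ G.En
    · have hCn : V ∈ Cn G := by
        by_contra hc; exact hV ⟨hEn, hc⟩
      have hc : G.fn V ((stepFn G X x)^[k] t) = G.fn V t := hCn.2 _ _
      simp [stepFn, hX, hEn, hc, (hpc V hCn).symm]
    · simp [stepFn, hX, hEn, ih]

lemma iterate_eq {G' G : FuncSystem Var Val} (hsim : sysEquiv G' G)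
    {t : Assign Var Val} (h1 : PCompat t G') (h2 : PCompat t G)
    (X : Finset Var) (x : Assign Var Val) (k : ℕ) :
    (stepFn G' X x)^[k] t = (stepFn G X x)^[k] t := by
  induction k with
  | zero => rfl
  | succ k ih =>
    funext V
    rw [Function.iterate_succ_apply', Function.iterate_succ_apply', ih]
    set u := (stepFn G X x)^[k] t with hu
    by_cases hX : V ∈ X
    · simp [stepFn, hX]
    by_cases hV : V ∈ G'.En \ Cn G'
    · have hVG : V ∈ G.En \ Cn G := hsim.1 ▸ hV
      simp only [stepFn, if_neg hX, if_pos hV.1, if_pos hVG.1]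
      exact hsim.2 V hV u u (fun _ _ _ => rfl)
    · have hVG : V ∉ G.En \ Cn G := hsim.1 ▸ hV
      have huV : u V = t V := iterate_pc h2 hX hVG k
      have lhs : stepFn G' X x u V = t V := by
        by_cases hEn : V ∈ G'.En
        · have hCn : V ∈ Cn G' := by
            by_contra hc; exact hV ⟨hEn, hc⟩
          have hc : G'.fn V u = G'.fn V t := hCn.2 _ _
          simp [stepFn, hX, hEn, hc, (h1 V hCn).symm]
        · simp [stepFn, hX, hEn, huV]
      have rhs : stepFn G X x u V = t V := by
        by_cases hEn : V ∈ G.En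
        · have hCn : V ∈ Cn G := by
            by_contra hc; exact hVG ⟨hEn, hc⟩
          have hc : G.fn V u = G.fn V t := hCn.2 _ _
          simp [stepFn, hX, hEn, hc, (h2 V hCn).symm]
        · simp [stepFn, hX, hEn, huV]
      rw [lhs, rhs]

lemma interveneAssign_eq {G' G : FuncSystem Var Val} (hsim : sysEquiv G' G)
    {t : Assign Var Val} (h1 : PCompat t G') (h2 : PCompat t G)
    (X : Finset Var) (x : Assign Var Val) :
    interveneAssign G' X x t = interveneAssign G X x t :=
  iterate_eq hsim h1 h2 X x _

lemma pcompat_intervene (G : FuncSystem Var Val) (X : Finset Var) (x t : Assign Var Val) :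
    PCompat (interveneAssign G X x t) (restrictSys G X) := by
  intro V hV
  obtain ⟨⟨hEn, hX⟩, hconst⟩ := hV
  have hX' : V ∉ X := hX
  show interveneAssign G X x t V = G.fn V (interveneAssign G X x t)
  conv_lhs => rw [interveneAssign, Function.iterate_succ_apply']
  have : stepFn G X x ((stepFn G X x)^[Fintype.card Var] t) V
      = G.fn V ((stepFn G X x)^[Fintype.card Var] t) := by
    simp [stepFn, hX', hEn]
  rw [this]
  exact hconst _ _

/-- CO-satisfaction of singletons is invariant under similarity of the function component. -/
lemma co_singleton_invariant (φ : Formula Var Val) :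
    IsCO φ → ∀ (t : Assign Var Val) (G' G : FuncSystem Var Val),
      PCompat t G' → PCompat t G → sysEquiv G' G →
      (gsat ({(t, G')} : GCT Var Val) φ ↔ gsat ({(t, G)} : GCT Var Val) φ) := by
  induction φ with
  | eq V v => intro _ t G' G _ _ _; rw [gsat_eq_singleton, gsat_eq_singleton]
  | dep l Y => intro h; exact h.elim
  | neg ψ ih =>
    intro h t G' G h1 h2 hs
    rw [gsat_neg_singleton, gsat_neg_singleton, ih h t G' G h1 h2 hs]
  | and ψ χ ih1 ih2 =>
    intro h t G' G h1 h2 hs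
    rw [gsat_and_iff, gsat_and_iff, ih1 h.1 t G' G h1 h2 hs, ih2 h.2 t G' G h1 h2 hs]
  | or ψ χ ih1 ih2 =>
    intro h t G' G h1 h2 hs
    rw [gsat_singleton_or h.1 h.2, gsat_singleton_or h.1 h.2,
      ih1 h.1 t G' G h1 h2 hs, ih2 h.2 t G' G h1 h2 hs]
  | gor ψ χ ih1 ih2 => intro h; exact h.elim
  | cf X x ψ ih =>
    intro h t G' G h1 h2 hs
    rw [gsat_cf_singleton, gsat_cf_singleton]
    have he : interveneAssign G' X x t = interveneAssign G X x t :=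
      interveneAssign_eq hs h1 h2 X x
    rw [he]
    exact ih h (interveneAssign G X x t) (restrictSys G' X) (restrictSys G X)
      (he ▸ pcompat_intervene G' X x t) (pcompat_intervene G X x t)
      (sysEquiv_restrict hs X)

end AuxPC
section AuxForm

variable {Var : Type} {Val : Var → Type} [DecidableEq Var] [Fintype Var] [Nonempty Var]
  [∀ V, Fintype (Val V)] [∀ V, Nonempty (Val V)]

lemma gsat_falsum_singleton (p : Assign Var Val × FuncSystem Var Val) :
    ¬ gsat ({p} : GCT Var Val) falsum := by
  intro h
  rw [falsum, gsat_and_iff] at h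
  obtain ⟨h1, h2⟩ := h
  rw [gsat_eq_singleton] at h1
  rw [gsat_neg_singleton] at h2
  exact h2 ((gsat_eq_singleton _ _ _).2 h1)

lemma isCO_falsum : IsCO (falsum : Formula Var Val) := ⟨trivial, trivial⟩

lemma isCO_bigAnd (L : List (Formula Var Val)) (h : ∀ ψ ∈ L, IsCO ψ) :
    IsCO (bigAnd L) := by
  induction L with
  | nil => exact ⟨trivial, trivial⟩
  | cons φ l ih =>
    match l with
    | [] => exact h φ (by simp)
    | ψ :: l' =>
      exact ⟨h φ (by simp), ih (fun χ hχ => h χ (List.mem_cons_of_mem _ hχ))⟩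

lemma isCO_bigOr (L : List (Formula Var Val)) (h : ∀ ψ ∈ L, IsCO ψ) :
    IsCO (bigOr L) := by
  induction L with
  | nil => exact isCO_falsum
  | cons φ l ih =>
    match l with
    | [] => exact h φ (by simp)
    | ψ :: l' =>
      exact ⟨h φ (by simp), ih (fun χ hχ => h χ (List.mem_cons_of_mem _ hχ))⟩

lemma gsat_bigAnd (T : GCT Var Val) (L : List (Formula Var Val)) :
    gsat T (bigAnd L) ↔ ∀ ψ ∈ L, gsat T ψ := by
  induction L with
  | nil =>
    simp only [bigAnd, List.not_mem_nil, false_implies, implies_true, iff_true]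
    rw [gsat_neg_iff]
    exact fun p _ => gsat_falsum_singleton p
  | cons φ l ih =>
    match l, ih with
    | [], _ => simp [bigAnd]
    | ψ :: l', ih =>
      rw [show bigAnd (φ :: ψ :: l') = .and φ (bigAnd (ψ :: l')) from rfl,
        gsat_and_iff, ih]
      simp only [List.mem_cons]
      constructor
      · rintro ⟨h1, h2⟩ χ (rfl | hχ)
        · exact h1
        · exact h2 χ hχ
      · intro h
        exact ⟨h φ (Or.inl rfl), fun χ hχ => h χ (Or.inr hχ)⟩

lemma gsat_bigOr_singleton (p : Assign Var Val × FuncSystem Var Val)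
    (L : List (Formula Var Val)) (hL : ∀ ψ ∈ L, IsCO ψ) :
    gsat ({p} : GCT Var Val) (bigOr L) ↔ ∃ ψ ∈ L, gsat {p} ψ := by
  induction L with
  | nil =>
    simp only [bigOr, List.not_mem_nil, false_and, exists_false, iff_false]
    exact gsat_falsum_singleton p
  | cons φ l ih =>
    match l, ih with
    | [], _ => simp [bigOr]
    | ψ :: l', ih =>
      rw [show bigOr (φ :: ψ :: l') = .or φ (bigOr (ψ :: l')) from rfl,
        gsat_singleton_or (hL φ (by simp))
          (isCO_bigOr _ (fun χ hχ => hL χ (List.mem_cons_of_mem _ hχ))),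
        ih (fun χ hχ => hL χ (List.mem_cons_of_mem _ hχ))]
      simp only [List.mem_cons]
      constructor
      · rintro (h | ⟨χ, hχ, h⟩)
        · exact ⟨φ, Or.inl rfl, h⟩
        · exact ⟨χ, Or.inr hχ, h⟩
      · rintro ⟨χ, (rfl | hχ), h⟩
        · exact Or.inl h
        · exact Or.inr ⟨χ, hχ, h⟩

lemma gsat_bigOr_team (T : GCT Var Val) (L : List (Formula Var Val))
    (hL : ∀ ψ ∈ L, IsCO ψ) :
    gsat T (bigOr L) ↔ ∀ p ∈ T, ∃ ψ ∈ L, gsat {p} ψ := by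
  rw [co_flat (bigOr L) (isCO_bigOr L hL) T]
  exact forall_congr' fun p => imp_congr_right fun hp => gsat_bigOr_singleton p L hL

end AuxForm
section AuxDelta

variable {Var : Type} {Val : Var → Type} [DecidableEq Var] [Fintype Var] [Nonempty Var]
  [∀ V, Fintype (Val V)] [∀ V, Nonempty (Val V)]

/-- The value observed at `V` when intervening on all other variables with `w`. -/
noncomputable def nuVal (t : Assign Var Val) (G : FuncSystem Var Val) (V : Var)
    (w : Assign Var Val) : Val V :=
  if V ∈ G.En then G.fn V w else t V

lemma iterate_mem_erase {G : FuncSystem Var Val} {X : Finset Var} {x t : Assign Var Val}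
    (k : ℕ) {W : Var} (hW : W ∈ X) : (stepFn G X x)^[k + 1] t W = x W := by
  rw [Function.iterate_succ_apply']
  simp [stepFn, hW]

lemma iterate_notEn {G : FuncSystem Var Val} {X : Finset Var} {x t : Assign Var Val}
    {V : Var} (hX : V ∉ X) (hEn : V ∉ G.En) (k : ℕ) : (stepFn G X x)^[k] t V = t V := by
  induction k with
  | zero => rfl
  | succ k ih =>
    rw [Function.iterate_succ_apply']
    simp [stepFn, hX, hEn, ih]

lemma intervene_erase (G : FuncSystem Var Val) (V : Var) (w t : Assign Var Val) :
    interveneAssign G (Finset.univ.erase V) w t V = nuVal t G V w := by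
  have hVX : V ∉ Finset.univ.erase V := Finset.notMem_erase V _
  obtain ⟨m, hm⟩ : ∃ m, Fintype.card Var = m + 1 :=
    ⟨Fintype.card Var - 1, by have := Fintype.card_pos (α := Var); omega⟩
  rw [interveneAssign, hm, Function.iterate_succ_apply']
  by_cases hEn : V ∈ G.En
  · have h1 : stepFn G (Finset.univ.erase V) w
        ((stepFn G (Finset.univ.erase V) w)^[m + 1] t) V
        = G.fn V ((stepFn G (Finset.univ.erase V) w)^[m + 1] t) := by
      simp [stepFn, hVX, hEn]
    rw [h1, nuVal, if_pos hEn]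
    apply G.dep_only
    intro W hW
    have hWV : W ≠ V := fun h => G.pa_ne V (h ▸ hW)
    exact iterate_mem_erase m (Finset.mem_erase.2 ⟨hWV, Finset.mem_univ W⟩)
  · have h1 : stepFn G (Finset.univ.erase V) w
        ((stepFn G (Finset.univ.erase V) w)^[m + 1] t) V
        = (stepFn G (Finset.univ.erase V) w)^[m + 1] t V := by
      simp [stepFn, hVX, hEn]
    rw [h1, iterate_notEn hVX hEn, nuVal, if_neg hEn]

lemma gsat_cf_erase (p : Assign Var Val × FuncSystem Var Val) (V : Var) (c : Val V)
    (w : Assign Var Val) :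
    gsat ({p} : GCT Var Val) (.cf (Finset.univ.erase V) w (.eq V c)) ↔
      nuVal p.1 p.2 V w = c := by
  rw [gsat_cf_singleton, gsat_eq_singleton]
  show interveneAssign p.2 (Finset.univ.erase V) w p.1 V = c ↔ _
  rw [intervene_erase]

/-- The data determining the `≈`-class of a compatible pair. -/
noncomputable def dataOf (p : Assign Var Val × FuncSystem Var Val) :
    Assign Var Val × (∀ V, Assign Var Val → Val V) :=
  (p.1, fun V w => if V ∈ p.2.En \ Cn p.2 then p.2.fn V w else p.1 V)

/-- The CO-formula characterizing (on genuine singletons) the `≈`-class encoded by `d`. -/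
noncomputable def delta (d : Assign Var Val × (∀ V, Assign Var Val → Val V)) :
    Formula Var Val :=
  .and (eqConj d.1)
    (bigAnd (((Finset.univ : Finset (Var × Assign Var Val))).toList.map
      fun q => .cf (Finset.univ.erase q.1) q.2 (.eq q.1 (d.2 q.1 q.2))))

lemma isCO_eqConj (s : Assign Var Val) : IsCO (eqConj s) := by
  apply isCO_bigAnd
  intro ψ hψ
  simp only [List.mem_map] at hψ
  obtain ⟨V, _, rfl⟩ := hψ
  trivial

lemma isCO_delta (d : Assign Var Val × (∀ V, Assign Var Val → Val V)) :
    IsCO (delta d) := by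
  refine ⟨isCO_eqConj d.1, isCO_bigAnd _ ?_⟩
  intro ψ hψ
  simp only [List.mem_map] at hψ
  obtain ⟨q, _, rfl⟩ := hψ
  trivial

lemma gsat_eqConj (p : Assign Var Val × FuncSystem Var Val) (s : Assign Var Val) :
    gsat ({p} : GCT Var Val) (eqConj s) ↔ p.1 = s := by
  rw [eqConj, gsat_bigAnd]
  simp only [List.mem_map, Finset.mem_toList, Finset.mem_univ, true_and,
    forall_exists_index, forall_apply_eq_imp_iff]
  rw [funext_iff]
  exact forall_congr' fun V => gsat_eq_singleton p V (s V)

lemma gsat_delta (p : Assign Var Val × FuncSystem Var Val)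
    (d : Assign Var Val × (∀ V, Assign Var Val → Val V)) :
    gsat ({p} : GCT Var Val) (delta d) ↔
      p.1 = d.1 ∧ ∀ V w, nuVal p.1 p.2 V w = d.2 V w := by
  rw [delta, gsat_and_iff, gsat_eqConj, gsat_bigAnd]
  refine and_congr_right fun _ => ?_
  simp only [List.mem_map, Finset.mem_toList, Finset.mem_univ, true_and,
    forall_exists_index, forall_apply_eq_imp_iff]
  constructor
  · intro h V w
    exact (gsat_cf_erase p V (d.2 V w) w).1 (h (V, w))
  · intro h q
    exact (gsat_cf_erase p q.1 (d.2 q.1 q.2) q.2).2 (h q.1 q.2)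

lemma nuVal_dataOf {p : Assign Var Val × FuncSystem Var Val} (hc : Compat p.1 p.2) :
    ∀ V w, nuVal p.1 p.2 V w = (dataOf p).2 V w := by
  intro V w
  show nuVal p.1 p.2 V w = if V ∈ p.2.En \ Cn p.2 then p.2.fn V w else p.1 V
  rw [nuVal]
  by_cases hV : V ∈ p.2.En \ Cn p.2
  · rw [if_pos hV.1, if_pos hV]
  · rw [if_neg hV]
    by_cases hEn : V ∈ p.2.En
    · have hCn : V ∈ Cn p.2 := by
        by_contra hcn; exact hV ⟨hEn, hcn⟩
      rw [if_pos hEn, hCn.2 w p.1, ← hc V hEn]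
    · rw [if_neg hEn]

lemma star_sysEquiv {s : Assign Var Val} {G F : FuncSystem Var Val}
    (hG : Compat s G) (hF : Compat s F)
    (h : ∀ V w, nuVal s G V w = nuVal s F V w) : sysEquiv G F := by
  have key : ∀ (H J : FuncSystem Var Val), Compat s J →
      (∀ V w, nuVal s H V w = nuVal s J V w) →
      ∀ V, V ∈ H.En \ Cn H → V ∈ J.En \ Cn J := by
    intro H J hJ hHJ V hV
    by_contra hVJ
    have hconst : ∀ w, nuVal s J V w = s V := by
      intro w
      rw [nuVal]
      by_cases hEn : V ∈ J.En
      · have hCn : V ∈ Cn J := by by_contra hc; exact hVJ ⟨hEn, hc⟩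
        rw [if_pos hEn, hCn.2 w s, ← hJ V hEn]
      · rw [if_neg hEn]
    obtain ⟨a, b, hab⟩ : ∃ a b, H.fn V a ≠ H.fn V b := by
      by_contra hc
      push_neg at hc
      exact hV.2 ⟨hV.1, hc⟩
    have e1 : H.fn V a = s V := by
      have := (hHJ V a).trans (hconst a)
      rwa [nuVal, if_pos hV.1] at this
    have e2 : H.fn V b = s V := by
      have := (hHJ V b).trans (hconst b)
      rwa [nuVal, if_pos hV.1] at this
    exact hab (e1.trans e2.symm)
  have hset : G.En \ Cn G = F.En \ Cn F := by
    ext V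
    exact ⟨key G F hF h V, key F G hG (fun V w => (h V w).symm) V⟩
  refine ⟨hset, fun V hV => ?_⟩
  have hVF : V ∈ F.En \ Cn F := hset ▸ hV
  apply fnEquiv_of_fn_eq
  intro w
  have := h V w
  rwa [nuVal, nuVal, if_pos hV.1, if_pos hVF.1] at this

end AuxDelta
/-- expressive completeness of CO over generalized causal teams: a
nonempty class of generalized causal teams is definable by a CO-formula iff it is flat
and closed under equivalence ≈. -/
theorem co_expressive_completeness {Var : Type} [Fintype Var] [DecidableEq Var] [Nonempty Var]
    {Val : Var → Type} [∀ V, Fintype (Val V)] [∀ V, Nonempty (Val V)]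
    (K : Set (GCT Var Val)) (hK : ∀ T ∈ K, IsGCT T) (hne : K.Nonempty) :
    (∃ φ : Formula Var Val, IsCO φ ∧
        ∀ T : GCT Var Val, IsGCT T → (T ∈ K ↔ gsat T φ)) ↔
    ((∀ T : GCT Var Val, IsGCT T →
        (T ∈ K ↔ ∀ p ∈ T, ({p} : GCT Var Val) ∈ K)) ∧
     (∀ T S : GCT Var Val, IsGCT T → IsGCT S → T ∈ K → gctEquiv T S → S ∈ K)) := by
  constructor
  · rintro ⟨φ, hCO, hdef⟩
    constructor
    · intro T hT
      rw [hdef T hT, co_flat φ hCO T]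
      refine forall_congr' fun p => imp_congr_right fun hp => ?_
      have hpg : IsGCT ({p} : GCT Var Val) := by
        intro q hq
        rw [Set.mem_singleton_iff] at hq
        subst hq
        exact hT _ hp
      rw [hdef {p} hpg]
    · intro T S hT hS hTK hE
      rw [hdef S hS]
      rw [hdef T hT] at hTK
      rw [co_flat φ hCO]
      intro p hp
      have hmem : p.1 ∈ {a | ∃ G, (a, G) ∈ S ∧ sysEquiv G p.2} :=
        ⟨p.2, hp, sysEquiv_refl p.2⟩
      rw [← hE p.2] at hmem
      obtain ⟨G', hG'T, hsim⟩ := hmem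
      have h1 : gsat ({(p.1, G')} : GCT Var Val) φ := (co_flat φ hCO T).1 hTK _ hG'T
      have pc1 : PCompat p.1 G' := ((hT _ hG'T).1).pcompat
      have pc2 : PCompat p.1 p.2 := ((hS p hp).1).pcompat
      exact (co_singleton_invariant φ hCO p.1 G' p.2 pc1 pc2 hsim).1 h1
  · rintro ⟨hflat, hclosed⟩
    classical
    set S : Finset (Assign Var Val × (∀ V, Assign Var Val → Val V)) :=
      Finset.univ.filter (fun d => ∃ p : Assign Var Val × FuncSystem Var Val,
        ({p} : GCT Var Val) ∈ K ∧ dataOf p = d) with hSdef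
    refine ⟨bigOr (S.toList.map delta), ?_, ?_⟩
    · apply isCO_bigOr
      intro ψ hψ
      simp only [List.mem_map] at hψ
      obtain ⟨d, _, rfl⟩ := hψ
      exact isCO_delta d
    · intro T hT
      rw [hflat T hT, gsat_bigOr_team T _ (by
        intro ψ hψ
        simp only [List.mem_map] at hψ
        obtain ⟨d, _, rfl⟩ := hψ
        exact isCO_delta d)]
      refine forall_congr' fun p => imp_congr_right fun hp => ?_
      have hpg : IsGCT ({p} : GCT Var Val) := by
        intro q hq
        rw [Set.mem_singleton_iff] at hq
        subst hq
        exact hT _ hp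
      have hcp : Compat p.1 p.2 := (hT p hp).1
      constructor
      · intro hpK
        refine ⟨delta (dataOf p), List.mem_map.2 ⟨dataOf p, ?_, rfl⟩, ?_⟩
        · rw [Finset.mem_toList, hSdef, Finset.mem_filter]
          exact ⟨Finset.mem_univ _, p, hpK, rfl⟩
        · rw [gsat_delta]
          exact ⟨rfl, nuVal_dataOf hcp⟩
      · rintro ⟨ψ, hψ, hsat⟩
        obtain ⟨d, hdS, rfl⟩ := List.mem_map.1 hψ
        rw [Finset.mem_toList, hSdef, Finset.mem_filter] at hdS
        obtain ⟨-, q, hqK, rfl⟩ := hdS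
        have hqg : IsGCT ({q} : GCT Var Val) := hK _ hqK
        have hcq : Compat q.1 q.2 := (hqg q rfl).1
        rw [gsat_delta] at hsat
        obtain ⟨hp1, hnu⟩ := hsat
        have hp1' : p.1 = q.1 := hp1
        have hnu' : ∀ V w, nuVal q.1 p.2 V w = nuVal q.1 q.2 V w := by
          intro V w
          have e1 : nuVal q.1 p.2 V w = nuVal p.1 p.2 V w := by
            rw [nuVal, nuVal, hp1']
          rw [e1, hnu V w, ← nuVal_dataOf hcq]
        have hsim : sysEquiv p.2 q.2 :=
          star_sysEquiv (hp1' ▸ hcp) hcq hnu'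
        have hequiv : gctEquiv ({q} : GCT Var Val) ({p} : GCT Var Val) := by
          intro H
          ext a
          simp only [Set.mem_setOf_eq, Set.mem_singleton_iff, Prod.ext_iff]
          constructor
          · rintro ⟨G0, ⟨ha, hG0⟩, hsimH⟩
            exact ⟨p.2, ⟨ha.trans hp1'.symm, rfl⟩,
              sysEquiv_trans hsim (hG0 ▸ hsimH)⟩
          · rintro ⟨G0, ⟨ha, hG0⟩, hsimH⟩
            exact ⟨q.2, ⟨ha.trans hp1', rfl⟩,
              sysEquiv_trans (sysEquiv_symm hsim) (hG0 ▸ hsimH)⟩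
        exact hclosed {q} {p} hqg hpg hqK hequiv

end CausalTeams
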